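/- arXiv:2011.11219 — 8 statements merged into one kernel-verified Lean document; each statement's English description precedes it below -/
import Mathlib

section
/- An affine Legendre equivalence 𝓛_F intertwines the two Legendre fibrations with the induced affine maps of the bases: with π(x, p, z) = (x, z), π'(x, p, z) = (p, pᵀx − z), F(x, z) = (Ax + b, z + cᵀx + d) and F*(p, z') = (A'p + b', z' + c'ᵀp + d'), where c' = A⁻¹b and d' = b'ᵀb − d, one has π ∘ 𝓛_F = F ∘ π and π' ∘ 𝓛_F = F* ∘ π' on all of ℝ^{2n+1}. -/
open Matrix

/-- An affine Legendre equivalence `𝓛_F` intertwines the two Legendre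
fibrations `π(x,p,z) = (x,z)` and `π'(x,p,z) = (p, pᵀx − z)` with the induced affine
maps `F(x,z) = (Ax+b, z+cᵀx+d)` and `F*(p,z') = (A'p+b', z'+c'ᵀp+d')`, where
`A' = (Aᵀ)⁻¹`, `b' = A'c`, `c' = A⁻¹b`, `d' = b'ᵀb − d`:
`π ∘ 𝓛_F = F ∘ π` and `π' ∘ 𝓛_F = F* ∘ π'`. -/
theorem affine_legendre_equivalence_intertwines_fibrations (n : ℕ)
    (A : Matrix (Fin n) (Fin n) ℝ) (hA : IsUnit A)
    (b c : Fin n → ℝ) (d : ℝ)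
    (A' : Matrix (Fin n) (Fin n) ℝ) (hA' : A' = Aᵀ⁻¹)
    (b' c' : Fin n → ℝ) (hb' : b' = A' *ᵥ c) (hc' : c' = A⁻¹ *ᵥ b)
    (d' : ℝ) (hd' : d' = b' ⬝ᵥ b - d)
    (L : ((Fin n → ℝ) × (Fin n → ℝ) × ℝ) → ((Fin n → ℝ) × (Fin n → ℝ) × ℝ))
    (hL : ∀ q, L q = (A *ᵥ q.1 + b, A' *ᵥ q.2.1 + b', q.2.2 + c ⬝ᵥ q.1 + d))
    (π π' : ((Fin n → ℝ) × (Fin n → ℝ) × ℝ) → (Fin n → ℝ) × ℝ)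
    (hπ : ∀ q, π q = (q.1, q.2.2))
    (hπ' : ∀ q, π' q = (q.2.1, q.2.1 ⬝ᵥ q.1 - q.2.2))
    (F Fstar : (Fin n → ℝ) × ℝ → (Fin n → ℝ) × ℝ)
    (hF : ∀ w, F w = (A *ᵥ w.1 + b, w.2 + c ⬝ᵥ w.1 + d))
    (hFstar : ∀ w, Fstar w = (A' *ᵥ w.1 + b', w.2 + c' ⬝ᵥ w.1 + d')) :
    (∀ q, π (L q) = F (π q)) ∧ (∀ q, π' (L q) = Fstar (π' q)) := by
  have hdet : IsUnit A.det := (Matrix.isUnit_iff_isUnit_det A).mp hA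
  have hA'T : A'ᵀ = A⁻¹ := by
    rw [hA', Matrix.transpose_nonsing_inv, Matrix.transpose_transpose]
  have hATA' : Aᵀ * A' = 1 := by
    rw [hA']
    exact Matrix.mul_nonsing_inv _ (by simpa using hdet)
  have hkey : ∀ v w : Fin n → ℝ, (A' *ᵥ v) ⬝ᵥ (A *ᵥ w) = v ⬝ᵥ w := by
    intro v w
    rw [Matrix.dotProduct_mulVec, ← Matrix.mulVec_transpose,
      Matrix.mulVec_mulVec, hATA', Matrix.one_mulVec]
  have hkey2 : ∀ v : Fin n → ℝ, (A' *ᵥ v) ⬝ᵥ b = v ⬝ᵥ c' := by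
    intro v
    rw [hc', Matrix.dotProduct_mulVec, ← Matrix.mulVec_transpose, ← hA'T,
      Matrix.transpose_transpose]
  constructor
  · intro q
    rw [hπ, hπ, hL, hF]
  · intro q
    obtain ⟨x, p, z⟩ := q
    rw [hπ', hπ', hL, hFstar]
    refine Prod.ext rfl ?_
    simp only
    have h3 : b' ⬝ᵥ (A *ᵥ x) = c ⬝ᵥ x := by
      rw [hb', hkey]
    rw [add_dotProduct, dotProduct_add, dotProduct_add,
      hkey, hkey2, h3, dotProduct_comm p c', hd']
    ring
end

section
/- Local expression of the quasi-Hessian metric (Lemma 3.8): let I ⊔ J = {1,…,n} be a partition, U ⊆ ℝ^I × ℝ^J open, g : U → ℝ a C² function, and ι : U → ℝ^n × ℝ^n the generating-function parametrization. Define the symmetric bilinear form τ on ℝ^n × ℝ^n by τ((a, b), (c, d)) = ½(aᵀd + cᵀb). Then for every point w ∈ U and all u, v ∈ ℝ^I × ℝ^J, τ(Dι_w(u), Dι_w(v)) = u_Iᵀ G_II(w) v_I − u_Jᵀ G_JJ(w) v_J, where G_II(w) = (∂²g/∂x_i∂x_k(w))_{i,k∈I} and G_JJ(w) = (∂²g/∂p_j∂p_l(w))_{j,l∈J}.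 That is, the quasi-Hessian metric h = ι*τ equals Σ_{i,k∈I} (∂²g/∂x_i∂x_k) dx_i dx_k − Σ_{j,l∈J} (∂²g/∂p_j∂p_l) dp_j dp_l. -/
/-!
The parametrization is a fixed linear map `σ_I : (x, p) ↦ ((x_I, -p_J), (p_I, x_J))` applied to
the graph `y ↦ (y, ∇g(y))`, so `Dι_w u = σ_I (u, B(u, ·))` with `B` the Hessian of `g` at `w`.
Pairing by `τ` gives `½ (B(v, u_I) + B(u, v_I) - B(u, v_J) - B(v, u_J))`; since `B` is symmetric
the mixed `I × J` terms cancel, leaving `B(u_I, v_I) - B(u_J, v_J)`.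
-/

open Finset

namespace LinearMap.BilinForm

variable {R M : Type*} [CommRing R] [AddCommGroup M] [Module R M]

theorem IsSymm.cross_terms_cancel {B : LinearMap.BilinForm R M} (hB : B.IsSymm)
    (x₁ x₂ y₁ y₂ : M) :
    B (y₁ + y₂) x₁ + B (x₁ + x₂) y₁ - (B (x₁ + x₂) y₂ + B (y₁ + y₂) x₂)
      = 2 * (B x₁ y₁ - B x₂ y₂) := by
  simp only [map_add, LinearMap.add_apply, hB.eq y₁ x₁, hB.eq y₂ x₁, hB.eq y₁ x₂, hB.eq y₂ x₂]
  ring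

variable {ι : Type*} [Fintype ι] [DecidableEq ι]

theorem IsSymm.sum_mul_apply_single_sub_sum_compl {B : LinearMap.BilinForm R (ι → R)}
    (hB : B.IsSymm) (s : Finset ι) (x y : ι → R) :
    (∑ k ∈ s, x k * B y (Pi.single k 1) - ∑ k ∈ sᶜ, y k * B x (Pi.single k 1))
      + (∑ k ∈ s, y k * B x (Pi.single k 1) - ∑ k ∈ sᶜ, x k * B y (Pi.single k 1))
    = 2 * (∑ i ∈ s, ∑ k ∈ s, B (Pi.single i 1) (Pi.single k 1) * x i * y k
          - ∑ i ∈ sᶜ, ∑ k ∈ sᶜ, B (Pi.single i 1) (Pi.single k 1) * x i * y k) := by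
  let part (t : Finset ι) (z : ι → R) : ι → R := ∑ k ∈ t, z k • Pi.single k 1
  have hpart (z : ι → R) : part s z + part sᶜ z = z := by
    ext j; by_cases hj : j ∈ s <;> simp [part, Pi.single_apply, hj]
  have hsum (t : Finset ι) (z z' : ι → R) :
      ∑ k ∈ t, z k * B z' (Pi.single k 1) = B z' (part t z) := by
    simp [part]
  have hdouble (t : Finset ι) :
      ∑ i ∈ t, ∑ k ∈ t, B (Pi.single i 1) (Pi.single k 1) * x i * y k
        = B (part t x) (part t y) := by
    simp only [part, map_sum, map_smul, LinearMap.sum_apply, LinearMap.smul_apply, smul_eq_mul,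
      mul_sum]
    rw [sum_comm]
    refine sum_congr rfl fun i _ => sum_congr rfl fun k _ => by ring
  rw [hsum, hsum, hsum, hsum, hdouble, hdouble, ← hB.cross_terms_cancel, hpart, hpart]
  ring

end LinearMap.BilinForm

section PartialSwap

variable {R ι : Type*} [Ring R] [TopologicalSpace R] [IsTopologicalRing R] [DecidableEq ι]

def partialSwap (I : Finset ι) : (ι → R) × (ι → R) →L[R] (ι → R) × (ι → R) :=
  (ContinuousLinearMap.pi fun k =>
    if k ∈ I then (ContinuousLinearMap.proj k).comp (ContinuousLinearMap.fst R (ι → R) (ι → R))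
    else -(ContinuousLinearMap.proj k).comp (ContinuousLinearMap.snd R (ι → R) (ι → R))).prod
  (ContinuousLinearMap.pi fun k =>
    if k ∈ I then (ContinuousLinearMap.proj k).comp (ContinuousLinearMap.snd R (ι → R) (ι → R))
    else (ContinuousLinearMap.proj k).comp (ContinuousLinearMap.fst R (ι → R) (ι → R)))

theorem partialSwap_apply (I : Finset ι) (x p : ι → R) :
    partialSwap I (x, p)
      = (fun k => if k ∈ I then x k else -p k, fun k => if k ∈ I then p k else x k) := by
  ext k <;> by_cases hk : k ∈ I <;> simp [partialSwap, hk]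

end PartialSwap

theorem partialSwap_fst_dotProduct_snd {R ι : Type*} [CommRing R] [TopologicalSpace R]
    [IsTopologicalRing R] [Fintype ι] [DecidableEq ι] (I : Finset ι) (x p y q : ι → R) :
    (partialSwap I (x, p)).1 ⬝ᵥ (partialSwap I (y, q)).2
      = ∑ k ∈ I, x k * q k - ∑ k ∈ Iᶜ, y k * p k := by
  rw [partialSwap_apply, partialSwap_apply, dotProduct, ← sum_add_sum_compl I, sub_eq_add_neg,
    ← sum_neg_distrib]
  congr 1 <;> refine sum_congr rfl fun k hk => ?_
  · simp [hk]
  · simp [mem_compl.1 hk, mul_comm]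

theorem fderiv_partialSwap_graph {𝕜 ι : Type*} [NontriviallyNormedField 𝕜] [Fintype ι]
    [DecidableEq ι] (I : Finset ι) {P : (ι → 𝕜) → ι → 𝕜} {P' : (ι → 𝕜) →L[𝕜] ι → 𝕜}
    {w : ι → 𝕜} (hP : HasFDerivAt P P' w) (u : ι → 𝕜) :
    fderiv 𝕜 (fun y => partialSwap I (y, P y)) w u = partialSwap I (u, P' u) := by
  have h : HasFDerivAt (fun y => partialSwap I (y, P y))
      ((partialSwap I).comp ((ContinuousLinearMap.id 𝕜 _).prod P')) w :=
    (partialSwap (R := 𝕜) I).hasFDerivAt.comp w ((hasFDerivAt_id w).prodMk hP)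
  rw [h.fderiv]
  rfl

theorem ContDiffAt.hasFDerivAt_fderiv_apply {𝕜 E F : Type*} [NontriviallyNormedField 𝕜]
    [NormedAddCommGroup E] [NormedSpace 𝕜 E] [NormedAddCommGroup F] [NormedSpace 𝕜 F]
    {g : E → F} {w : E} (hg : ContDiffAt 𝕜 2 g w) (b : E) :
    HasFDerivAt (fun y => fderiv 𝕜 g y b) ((fderiv 𝕜 (fderiv 𝕜 g) w).flip b) w := by
  have hA : HasFDerivAt (fderiv 𝕜 g) (fderiv 𝕜 (fderiv 𝕜 g) w) w :=
    ((hg.fderiv_right (m := 1) le_rfl).differentiableAt one_ne_zero).hasFDerivAt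
  simpa using hA.clm_apply (hasFDerivAt_const b w)

/-- Local expression of the quasi-Hessian metric (Lemma 3.8): for the
generating-function parametrization `ι` of a generating function `g(x_I, p_J)` and the
pairing `τ((a,b),(c,d)) = ½(aᵀd + cᵀb)`, one has
`τ(Dι_w(u), Dι_w(v)) = u_Iᵀ G_II(w) v_I − u_Jᵀ G_JJ(w) v_J`,
i.e. `h = ι*τ = Σ_{i,k∈I} g_{x_i x_k} dx_i dx_k − Σ_{j,l∈J} g_{p_j p_l} dp_j dp_l`. -/
theorem quasi_hessian_metric_local_expression (n : ℕ) (I : Finset (Fin n))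
    (U : Set (Fin n → ℝ)) (hU : IsOpen U)
    (g : (Fin n → ℝ) → ℝ) (hg : ContDiffOn ℝ 2 g U)
    (dg : (Fin n → ℝ) → Fin n → ℝ)
    (hdg : ∀ w k, dg w k = fderiv ℝ g w (Pi.single k 1))
    (H : (Fin n → ℝ) → Fin n → Fin n → ℝ)
    (hH : ∀ w i j, H w i j
      = fderiv ℝ (fun y => fderiv ℝ g y (Pi.single j 1)) w (Pi.single i 1))
    (ι : (Fin n → ℝ) → (Fin n → ℝ) × (Fin n → ℝ))
    (hι : ∀ w, ι w = ((fun k => if k ∈ I then w k else -(dg w k)),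
                      (fun k => if k ∈ I then dg w k else w k)))
    (τ : ((Fin n → ℝ) × (Fin n → ℝ)) → ((Fin n → ℝ) × (Fin n → ℝ)) → ℝ)
    (hτ : ∀ a c, τ a c = (a.1 ⬝ᵥ c.2 + c.1 ⬝ᵥ a.2) / 2) :
    ∀ w ∈ U, ∀ u v : Fin n → ℝ,
      τ (fderiv ℝ ι w u) (fderiv ℝ ι w v)
        = (∑ i ∈ I, ∑ k ∈ I, H w i k * u i * v k)
          - (∑ j ∈ Iᶜ, ∑ l ∈ Iᶜ, H w j l * u j * v l) := by
  intro w hw u v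
  have hgw : ContDiffAt ℝ 2 g w := hg.contDiffAt (hU.mem_nhds hw)
  set A := fderiv ℝ (fderiv ℝ g) w
  have hA_apply (k : Fin n) := hgw.hasFDerivAt_fderiv_apply (Pi.single k 1)
  have hdgA : HasFDerivAt dg (ContinuousLinearMap.pi fun k => A.flip (Pi.single k 1)) w := by
    rw [show dg = fun y k => fderiv ℝ g y (Pi.single k 1) from funext₂ hdg]
    exact hasFDerivAt_pi.2 hA_apply
  have hHA (i k : Fin n) : H w i k = A (Pi.single i 1) (Pi.single k 1) := by
    rw [hH, (hA_apply k).fderiv]; rfl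
  have hsymm : LinearMap.BilinForm.IsSymm A.toLinearMap₁₂ := ⟨hgw.isSymmSndFDerivAt (by simp)⟩
  have hcancel := hsymm.sum_mul_apply_single_sub_sum_compl I u v
  simp only [ContinuousLinearMap.toLinearMap₁₂_apply_apply_apply] at hcancel
  rw [show ι = fun y => partialSwap I (y, dg y) from funext fun y => by rw [hι, partialSwap_apply],
    hτ, fderiv_partialSwap_graph I hdgA, fderiv_partialSwap_graph I hdgA]
  simp only [ContinuousLinearMap.pi_apply, ContinuousLinearMap.flip_apply,
    partialSwap_fst_dotProduct_snd, hHA, hcancel]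
  ring
end

section
/- The canonical cubic tensor is the third derivative of a generating function (Proposition 3.15, coordinate form): let I ⊔ J = {1,…,n} be a partition and g a C³ function on an open set U ⊆ ℝ^I × ℝ^J; write ∂_k for ∂/∂x_k (k ∈ I) or ∂/∂p_k (k ∈ J). For each index k define ℝ^n-valued functions a_k, b_k on U (the coefficient vectors of Φ(ι_*∂_k) and Φ'(ι_*∂_k) in the canonical flat frames) by: for k ∈ I, a_k = e_k − Σ_{j∈J} (∂_k∂_j g) e_j and b_k = Σ_{i∈I} (∂_k∂_i g) e_i; for k ∈ J, a_k = −Σ_{j∈J} (∂_k∂_j g) e_j and b_k = e_k + Σ_{i∈I} (∂_k∂_i g) e_i. Then for all indices k, l, m and every point of U, ½[ a_l · ∂_k b_m + a_m · ∂_k b_l − (∂_k a_l) · b_m − (∂_k a_m) · b_l ] = ∂_k∂_l∂_m g. In particular the canonical cubic tensor C(∂_k, ∂_l, ∂_m) = ∂_k∂_l∂_m g is totally symmetric. -/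
/-!
On the coordinates in `I`, `a_l` is the unit vector `e_l` while `b_m` consists of second
derivatives of `g`; on those in `J` the roles are swapped (up to sign). Differentiating kills the
unit-vector parts, so each dot product picks out a single third derivative:
`a_l · ∂_k b_m = [l ∈ I] ∂_k∂_m∂_l g` and `(∂_k a_l) · b_m = -[m ∉ I] ∂_k∂_l∂_m g`. The bracket
therefore collapses to `∂_k∂_m∂_l g + ∂_k∂_l∂_m g`, and Schwarz's theorem, applied to `g` and to
its first partials, makes the third derivatives totally symmetric.
-/

section Calculus

variable {E F : Type*} [NormedAddCommGroup E] [NormedSpace ℝ E]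
  [NormedAddCommGroup F] [NormedSpace ℝ F]

lemma fderiv_fderiv_apply_eq {f : E → F} {x : E} (hf : DifferentiableAt ℝ (fderiv ℝ f) x)
    (u v : E) : fderiv ℝ (fun y => fderiv ℝ f y u) x v = fderiv ℝ (fderiv ℝ f) x v u := by
  rw [fderiv_clm_apply hf (differentiableAt_const u)]
  simp

lemma ContDiffAt.fderiv_fderiv_apply_comm {f : E → F} {x : E} (hf : ContDiffAt ℝ 2 f x)
    (u v : E) :
    fderiv ℝ (fun y => fderiv ℝ f y u) x v = fderiv ℝ (fun y => fderiv ℝ f y v) x u := by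
  have hf' : DifferentiableAt ℝ (fderiv ℝ f) x :=
    (hf.fderiv_right (m := 1) (by norm_num)).differentiableAt one_ne_zero
  rw [fderiv_fderiv_apply_eq hf', fderiv_fderiv_apply_eq hf', hf.isSymmSndFDerivAt (by simp)]

lemma ContDiffAt.fderiv_fderiv_fderiv_apply_comm_left {f : E → F} {x : E}
    (hf : ContDiffAt ℝ 3 f x) (u v w : E) :
    fderiv ℝ (fun y => fderiv ℝ (fun z => fderiv ℝ f z w) y v) x u
      = fderiv ℝ (fun y => fderiv ℝ (fun z => fderiv ℝ f z w) y u) x v :=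
  ((hf.fderiv_right (m := 2) (by norm_num)).clm_apply
    (contDiffAt_const (c := w))).fderiv_fderiv_apply_comm v u

lemma ContDiffAt.differentiableAt_fderiv_fderiv_apply {f : E → F} {x : E}
    (hf : ContDiffAt ℝ 3 f x) (v w : E) :
    DifferentiableAt ℝ (fun y => fderiv ℝ (fun z => fderiv ℝ f z w) y v) x :=
  ((((hf.fderiv_right (m := 2) (by norm_num)).clm_apply contDiffAt_const).fderiv_right
    (m := 1) (by norm_num)).clm_apply contDiffAt_const).differentiableAt one_ne_zero

lemma ContDiffOn.fderiv_fderiv_fderiv_apply_comm_right {f : E → F} {s : Set E} {x : E}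
    (hs : IsOpen s) (hf : ContDiffOn ℝ 2 f s) (hx : x ∈ s) (u v w : E) :
    fderiv ℝ (fun y => fderiv ℝ (fun z => fderiv ℝ f z w) y v) x u
      = fderiv ℝ (fun y => fderiv ℝ (fun z => fderiv ℝ f z v) y w) x u := by
  have hsymm : (fun y => fderiv ℝ (fun z => fderiv ℝ f z w) y v)
      =ᶠ[nhds x] fun y => fderiv ℝ (fun z => fderiv ℝ f z v) y w := by
    filter_upwards [hs.mem_nhds hx] with y hy
    exact (hf.contDiffAt (hs.mem_nhds hy)).fderiv_fderiv_apply_comm w v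
  rw [hsymm.fderiv_eq]

lemma fderiv_pi_apply {ι : Type*} [Fintype ι] {Φ : E → ι → ℝ} {x : E}
    (hΦ : ∀ i, DifferentiableAt ℝ (fun y => Φ y i) x) (v : E) (i : ι) :
    fderiv ℝ Φ x v i = fderiv ℝ (fun y => Φ y i) x v := by
  rw [fderiv_apply (differentiableAt_pi.2 hΦ)]
  rfl

lemma fderiv_apply_of_eq_ite {ι : Type*} [Fintype ι] (p : ι → Prop) [DecidablePred p]
    {Φ : E → ι → ℝ} {φ : ι → E → ℝ} (c : ι → ℝ) {x : E}
    (hΦ : ∀ y i, Φ y i = if p i then φ i y else c i)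
    (hφ : ∀ i, p i → DifferentiableAt ℝ (φ i) x) (v : E) (i : ι) :
    fderiv ℝ Φ x v i = if p i then fderiv ℝ (φ i) x v else 0 := by
  have hcomp : ∀ i, (fun y => Φ y i) = if p i then φ i else fun _ => c i := fun i => by
    split_ifs with h <;> funext y <;> simp [hΦ, h]
  have hdiff : ∀ i, DifferentiableAt ℝ (fun y => Φ y i) x := fun i => by
    rw [hcomp]
    split_ifs with h
    · exact hφ i h
    · exact differentiableAt_const _
  rw [fderiv_pi_apply hdiff, hcomp]
  split_ifs <;> simp

end Calculus

lemma dotProduct_eq_apply_of_eq_single_of_eq_zero {ι R : Type*} [Fintype ι] [DecidableEq ι]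
    [NonAssocSemiring R] (p : ι → Prop) {l : ι} {x z : ι → R}
    (hx : ∀ j, p j → x j = (Pi.single l 1 : ι → R) j) (hz : ∀ j, ¬p j → z j = 0) :
    x ⬝ᵥ z = z l :=
  calc x ⬝ᵥ z = Pi.single l 1 ⬝ᵥ z := Finset.sum_congr rfl fun j _ => by
        by_cases hj : p j
        · rw [hx j hj]
        · simp [hz j hj]
    _ = z l := single_one_dotProduct l z

lemma half_bracket_eq_of_coordinates {ι : Type*} [Fintype ι] [DecidableEq ι] (I : Finset ι)
    (T : ι → ι → ℝ) (hT : ∀ l m, T l m = T m l) {a b da db : ι → ι → ℝ}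
    (ha : ∀ l j, j ∈ I → a l j = (Pi.single l 1 : ι → ℝ) j)
    (hb : ∀ m i, i ∉ I → b m i = (Pi.single m 1 : ι → ℝ) i)
    (hda : ∀ l j, da l j = if j ∈ I then 0 else -T l j)
    (hdb : ∀ m i, db m i = if i ∈ I then T m i else 0) (l m : ι) :
    (1 / 2 : ℝ) * (a l ⬝ᵥ db m + a m ⬝ᵥ db l - da l ⬝ᵥ b m - da m ⬝ᵥ b l) = T l m := by
  have hab : ∀ l m, a l ⬝ᵥ db m = if l ∈ I then T m l else 0 := fun l m => by
    rw [dotProduct_eq_apply_of_eq_single_of_eq_zero (· ∈ I) (l := l) (ha l)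
      (fun j (hj : j ∉ I) => by simp [hdb, hj]), hdb]
  have hba : ∀ l m, da l ⬝ᵥ b m = if m ∈ I then 0 else -T l m := fun l m => by
    rw [dotProduct_comm, dotProduct_eq_apply_of_eq_single_of_eq_zero (· ∉ I) (l := m) (hb m)
      (fun j (hj : ¬j ∉ I) => by simp [hda, not_not.1 hj]), hda]
  rw [hab, hab, hba, hba, hT m l]
  split_ifs <;> ring

/-- The canonical cubic tensor is the third derivative of a generating
function (Proposition 3.15, coordinate form): with the coefficient vectors `a_k, b_k` of
`Φ(ι_*∂_k)` and `Φ'(ι_*∂_k)` in the canonical flat frames, for a C³ generating function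
`g(x_I, p_J)` one has
`½[a_l·∂_k b_m + a_m·∂_k b_l − (∂_k a_l)·b_m − (∂_k a_m)·b_l] = ∂_k∂_l∂_m g`;
in particular `C(∂_k, ∂_l, ∂_m) = ∂_k∂_l∂_m g` is totally symmetric. -/
theorem canonical_cubic_tensor_is_third_derivative (n : ℕ) (I : Finset (Fin n))
    (U : Set (Fin n → ℝ)) (hU : IsOpen U)
    (g : (Fin n → ℝ) → ℝ) (hg : ContDiffOn ℝ 3 g U)
    (D2 : (Fin n → ℝ) → Fin n → Fin n → ℝ)
    (hD2 : ∀ w k j, D2 w k j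
      = fderiv ℝ (fun y => fderiv ℝ g y (Pi.single j 1)) w (Pi.single k 1))
    (D3 : (Fin n → ℝ) → Fin n → Fin n → Fin n → ℝ)
    (hD3 : ∀ w k l m, D3 w k l m = fderiv ℝ (fun y => D2 y l m) w (Pi.single k 1))
    (a b : Fin n → (Fin n → ℝ) → (Fin n → ℝ))
    (ha : ∀ k w j, a k w j = if j ∈ I then (if j = k then 1 else 0) else -(D2 w k j))
    (hb : ∀ k w i, b k w i = if i ∈ I then D2 w k i else (if i = k then 1 else 0)) :
    ∀ w ∈ U, ∀ k l m : Fin n,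
      ((1 : ℝ)/2) * ( a l w ⬝ᵥ fderiv ℝ (b m) w (Pi.single k 1)
              + a m w ⬝ᵥ fderiv ℝ (b l) w (Pi.single k 1)
              - fderiv ℝ (a l) w (Pi.single k 1) ⬝ᵥ b m w
              - fderiv ℝ (a m) w (Pi.single k 1) ⬝ᵥ b l w )
        = D3 w k l m
      ∧ D3 w k l m = D3 w l k m ∧ D3 w k l m = D3 w k m l := by
  intro w hw k l m
  have hg3 : ContDiffAt ℝ 3 g w := hg.contDiffAt (hU.mem_nhds hw)
  have hD3_eq : ∀ k l m, D3 w k l m = fderiv ℝ (fun y =>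
      fderiv ℝ (fun z => fderiv ℝ g z (Pi.single m 1)) y (Pi.single l 1)) w (Pi.single k 1) := by
    simp only [hD3, hD2, implies_true]
  have hD2_diff : ∀ l j, DifferentiableAt ℝ (fun y => D2 y l j) w := fun l j => by
    simpa only [hD2] using hg3.differentiableAt_fderiv_fderiv_apply _ _
  have hdb : ∀ m i, fderiv ℝ (b m) w (Pi.single k 1) i = if i ∈ I then D3 w k m i else 0 :=
    fun m i => by
      rw [fderiv_apply_of_eq_ite (· ∈ I) _ (hb m) (fun j _ => hD2_diff m j), hD3]
  have hda : ∀ l j,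
      fderiv ℝ (a l) w (Pi.single k 1) j = if j ∈ I then 0 else -D3 w k l j := fun l j => by
    have ha' : ∀ y j, a l y j = if j ∉ I then -D2 y l j else if j = l then 1 else 0 := by
      simp [ha, ite_not]
    rw [fderiv_apply_of_eq_ite (· ∉ I) _ ha' (fun j _ => (hD2_diff l j).neg), hD3]
    simp [ite_not, fderiv_fun_neg]
  have hD3_comm_right : ∀ l m, D3 w k l m = D3 w k m l := fun l m => by
    rw [hD3_eq, hD3_eq, (hg.of_le (by norm_num)).fderiv_fderiv_fderiv_apply_comm_right hU hw]
  refine ⟨half_bracket_eq_of_coordinates I (D3 w k) hD3_comm_right (a := fun l => a l w)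
      (b := fun m => b m w)
      (fun l j hj => by simp [ha, hj, Pi.single_apply])
      (fun m i hi => by simp [hb, hi, Pi.single_apply]) hda hdb l m, ?_, hD3_comm_right l m⟩
  rw [hD3_eq, hD3_eq, hg3.fderiv_fderiv_fderiv_apply_comm_left]
end

section
/- Invariance of the canonical divergence under affine Legendre equivalence (Lemma 4.6): let 𝓛_F be an affine Legendre equivalence of ℝ^{2n+1}. Then for all points P, Q ∈ ℝ^{2n+1}, D(𝓛_F(P), 𝓛_F(Q)) = D(P, Q). -/
open Matrix

/-- Invariance of the canonical divergence
`D((x₁,p₁,z₁),(x₂,p₂,z₂)) = z₁ + (p₂ᵀx₂ − z₂) − x₁ᵀp₂` under the affine Legendre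
equivalence `𝓛_F(x, p, z) = (Ax + b, A'p + b', z + cᵀx + d)`, `A' = (Aᵀ)⁻¹`, `b' = A'c`:
`D(𝓛_F(P), 𝓛_F(Q)) = D(P, Q)` for all `P, Q`. -/
theorem canonical_divergence_affine_legendre_invariant (n : ℕ)
    (D : ((Fin n → ℝ) × (Fin n → ℝ) × ℝ) → ((Fin n → ℝ) × (Fin n → ℝ) × ℝ) → ℝ)
    (hD : ∀ P Q, D P Q = P.2.2 + (Q.2.1 ⬝ᵥ Q.1 - Q.2.2) - P.1 ⬝ᵥ Q.2.1)
    (A : Matrix (Fin n) (Fin n) ℝ) (hA : IsUnit A)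
    (b c : Fin n → ℝ) (d : ℝ)
    (L : ((Fin n → ℝ) × (Fin n → ℝ) × ℝ) → ((Fin n → ℝ) × (Fin n → ℝ) × ℝ))
    (hL : ∀ q, L q = (A *ᵥ q.1 + b, Aᵀ⁻¹ *ᵥ q.2.1 + Aᵀ⁻¹ *ᵥ c, q.2.2 + c ⬝ᵥ q.1 + d)) :
    ∀ P Q, D (L P) (L Q) = D P Q := by
  have hdet : IsUnit A.det := (isUnit_iff_isUnit_det A).mp hA
  have key : ∀ w u : Fin n → ℝ, (Aᵀ⁻¹ *ᵥ w) ⬝ᵥ (A *ᵥ u) = w ⬝ᵥ u := by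
    intro w u
    rw [show Aᵀ⁻¹ = (A⁻¹)ᵀ from (transpose_nonsing_inv A).symm,
      dotProduct_comm, dotProduct_mulVec, vecMul_transpose, mulVec_mulVec,
      nonsing_inv_mul A hdet, one_mulVec, dotProduct_comm]
  have key' : ∀ w u : Fin n → ℝ, (A *ᵥ u) ⬝ᵥ (Aᵀ⁻¹ *ᵥ w) = u ⬝ᵥ w := by
    intro w u
    rw [dotProduct_comm, key, dotProduct_comm]
  intro P Q
  simp only [hD, hL, dotProduct_add, add_dotProduct, key, key']
  rw [dotProduct_comm b (Aᵀ⁻¹ *ᵥ Q.2.1), dotProduct_comm b (Aᵀ⁻¹ *ᵥ c), dotProduct_comm c P.1]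
  ring
end

section
/- Extended Pythagorean Theorem (Theorem 4.8): let P, Q, R ∈ ℝ^{2n+1} be three points with x- and p-coordinates x_P, x_Q, x_R and p_P, p_Q, p_R, and suppose there exist vectors e, m ∈ ℝ^n with eᵀm = 0 such that x_P − x_Q is a scalar multiple of e and p_R − p_Q is a scalar multiple of m (this holds when P and Q are joined by an e-curve with direction vector e, Q and R are joined by an m-curve with direction vector m, and the two curves are strictly orthogonal at Q). Then D(P, R) = D(P, Q) + D(Q, R). -/
open Matrix

/-- Extended Pythagorean Theorem (Theorem 4.8): if `x_P − x_Q` is a scalar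
multiple of `e`, `p_R − p_Q` is a scalar multiple of `m`, and `eᵀm = 0` (i.e. `P, Q` are
joined by an e-curve, `Q, R` by an m-curve, strictly orthogonal at `Q`), then
`D(P, R) = D(P, Q) + D(Q, R)` for the canonical divergence `D`. -/
theorem extended_pythagorean_theorem (n : ℕ)
    (D : ((Fin n → ℝ) × (Fin n → ℝ) × ℝ) → ((Fin n → ℝ) × (Fin n → ℝ) × ℝ) → ℝ)
    (hD : ∀ P Q, D P Q = P.2.2 + (Q.2.1 ⬝ᵥ Q.1 - Q.2.2) - P.1 ⬝ᵥ Q.2.1)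
    (P Q R : (Fin n → ℝ) × (Fin n → ℝ) × ℝ)
    (e m : Fin n → ℝ) (horth : e ⬝ᵥ m = 0)
    (he : ∃ k₀ : ℝ, P.1 - Q.1 = k₀ • e)
    (hm : ∃ k₁ : ℝ, R.2.1 - Q.2.1 = k₁ • m) :
    D P R = D P Q + D Q R := by
  obtain ⟨k₀, hk₀⟩ := he
  obtain ⟨k₁, hk₁⟩ := hm
  have key : (P.1 - Q.1) ⬝ᵥ (R.2.1 - Q.2.1) = 0 := by
    rw [hk₀, hk₁, smul_dotProduct, dotProduct_smul, horth]
    simp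
  have key' : P.1 ⬝ᵥ R.2.1 - P.1 ⬝ᵥ Q.2.1 - Q.1 ⬝ᵥ R.2.1 + Q.1 ⬝ᵥ Q.2.1 = 0 := by
    rw [← key, sub_dotProduct, dotProduct_sub, dotProduct_sub]
    ring
  have hc : Q.1 ⬝ᵥ Q.2.1 = Q.2.1 ⬝ᵥ Q.1 := dotProduct_comm _ _
  rw [hD, hD, hD]
  linarith
end

section
/- Derivative formula underlying the Projection Theorem (Theorem 4.9): let γ = (X, P, Z) : I → ℝ^n × ℝ^n × ℝ be a C¹ curve on an interval I satisfying the Legendrian condition Z'(s) = P(s)ᵀX'(s) for all s ∈ I, and fix a point q₀ = (x₀, p₀, z₀) ∈ ℝ^{2n+1}. Then the function F(s) := D(γ(s), q₀) is differentiable with F'(s) = (P(s) − p₀)ᵀ X'(s) for all s ∈ I. Consequently s₀ is a critical point of F if and only if (P(s₀) − p₀) is orthogonal to the velocity X'(s₀) of the projected curve. -/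
open Matrix

/-! The constant `p₀ᵀx₀ − z₀` drops out, so `F = Z − Xᵀp₀ + const`; the Legendrian condition
turns `Z'` into `Pᵀ X'`, leaving `F' = (P − p₀)ᵀ X'`. -/

section

variable {𝕜 ι : Type*} [NontriviallyNormedField 𝕜] [Fintype ι]
  {X : 𝕜 → ι → 𝕜} {X' : ι → 𝕜} {s : 𝕜}

theorem HasDerivAt.dotProduct_const (hX : HasDerivAt X X' s) (p : ι → 𝕜) :
    HasDerivAt (fun t => X t ⬝ᵥ p) (X' ⬝ᵥ p) s :=
  .fun_sum fun i _ => (hasDerivAt_pi.1 hX i).mul_const (p i)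

theorem HasDerivAt.sub_dotProduct_const_of_legendrian {Z : 𝕜 → 𝕜} {p : ι → 𝕜}
    (hX : HasDerivAt X X' s) (hZ : HasDerivAt Z (p ⬝ᵥ X') s) (p₀ : ι → 𝕜) :
    HasDerivAt (fun t => Z t - X t ⬝ᵥ p₀) ((p - p₀) ⬝ᵥ X') s := by
  rw [sub_dotProduct, dotProduct_comm p₀]
  exact hZ.sub (hX.dotProduct_const p₀)

end

/-- Derivative formula underlying the Projection Theorem (Theorem 4.9):
for a C¹ Legendrian curve `γ = (X, P, Z)` (i.e. `Z'(s) = P(s)ᵀX'(s)`) on an interval,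
and a fixed point `q₀ = (x₀, p₀, z₀)`, the function `F(s) = D(γ(s), q₀)` is
differentiable with `F'(s) = (P(s) − p₀)ᵀ X'(s)`; consequently `s₀` is a critical point
of `F` iff `P(s₀) − p₀` is orthogonal to the velocity `X'(s₀)` of the projected curve. -/
theorem projection_theorem_derivative_formula (n : ℕ) (a b : ℝ)
    (D : ((Fin n → ℝ) × (Fin n → ℝ) × ℝ) → ((Fin n → ℝ) × (Fin n → ℝ) × ℝ) → ℝ)
    (hD : ∀ P Q, D P Q = P.2.2 + (Q.2.1 ⬝ᵥ Q.1 - Q.2.2) - P.1 ⬝ᵥ Q.2.1)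
    (X P : ℝ → (Fin n → ℝ)) (Z : ℝ → ℝ)
    (X' : ℝ → (Fin n → ℝ)) (Z' : ℝ → ℝ)
    (hX : ∀ s ∈ Set.Ioo a b, HasDerivAt X (X' s) s)
    (hZ : ∀ s ∈ Set.Ioo a b, HasDerivAt Z (Z' s) s)
    (hLeg : ∀ s ∈ Set.Ioo a b, Z' s = P s ⬝ᵥ X' s)
    (x₀ p₀ : Fin n → ℝ) (z₀ : ℝ)
    (F : ℝ → ℝ) (hF : ∀ s, F s = D (X s, P s, Z s) (x₀, p₀, z₀)) :
    ∀ s ∈ Set.Ioo a b,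
      HasDerivAt F ((P s - p₀) ⬝ᵥ X' s) s ∧
      (deriv F s = 0 ↔ (P s - p₀) ⬝ᵥ X' s = 0) := by
  intro s hs
  have hF_eq : F = fun t => (Z t - X t ⬝ᵥ p₀) + (p₀ ⬝ᵥ x₀ - z₀) := by
    funext t
    rw [hF, hD]
    ring
  have hZ_leg : HasDerivAt Z (P s ⬝ᵥ X' s) s := hLeg s hs ▸ hZ s hs
  have hFd : HasDerivAt F ((P s - p₀) ⬝ᵥ X' s) s :=
    hF_eq ▸ ((hX s hs).sub_dotProduct_const_of_legendrian hZ_leg p₀).add_const _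
  exact ⟨hFd, by rw [hFd.deriv]⟩
end

section
/- Local formula for the canonical divergence via a generating function (first step of Theorem 4.14): let I ⊔ J = {1,…,n} be a partition, g a C¹ function on an open set U ⊆ ℝ^I × ℝ^J, and ι̃ : U → ℝ^{2n+1} the Legendre lift of the generating-function parametrization, ι̃(x_I, p_J) = (x, p, z) with x = (x_I, −∂g/∂p_J), p = (∂g/∂x_I, p_J), z = p_Jᵀx_J + g = g − p_Jᵀ(∂g/∂p_J). Then for all u, v ∈ U, D(ι̃(u), ι̃(v)) = g(u) − g(v) + x_J(u)ᵀ(p_J(u) − p_J(v)) + p_I(v)ᵀ(x_I(v) − x_I(u)), where x_J(u) = −(∂g/∂p_J)(u) and p_I(v) = (∂g/∂x_I)(v). -/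
open Matrix

/-- Local formula for the canonical divergence via a generating function
(first step of Theorem 4.14): for the Legendre lift `ι̃` of the generating-function
parametrization of `g(x_I, p_J)`,
`D(ι̃(u), ι̃(v)) = g(u) − g(v) + x_J(u)ᵀ(p_J(u) − p_J(v)) + p_I(v)ᵀ(x_I(v) − x_I(u))`,
where `x_J = −∂g/∂p_J` and `p_I = ∂g/∂x_I`. -/
theorem canonical_divergence_generating_function_formula (n : ℕ) (I : Finset (Fin n))
    (U : Set (Fin n → ℝ)) (hU : IsOpen U)
    (g : (Fin n → ℝ) → ℝ) (hg : ContDiffOn ℝ 1 g U)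
    (dg : (Fin n → ℝ) → Fin n → ℝ)
    (hdg : ∀ w k, dg w k = fderiv ℝ g w (Pi.single k 1))
    (D : ((Fin n → ℝ) × (Fin n → ℝ) × ℝ) → ((Fin n → ℝ) × (Fin n → ℝ) × ℝ) → ℝ)
    (hD : ∀ P Q, D P Q = P.2.2 + (Q.2.1 ⬝ᵥ Q.1 - Q.2.2) - P.1 ⬝ᵥ Q.2.1)
    (ι : (Fin n → ℝ) → (Fin n → ℝ) × (Fin n → ℝ) × ℝ)
    (hι : ∀ w, ι w = ((fun k => if k ∈ I then w k else -(dg w k)),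
                      (fun k => if k ∈ I then dg w k else w k),
                      (∑ j ∈ Iᶜ, w j * (-(dg w j))) + g w)) :
    ∀ u ∈ U, ∀ v ∈ U,
      D (ι u) (ι v) = g u - g v
        + (∑ j ∈ Iᶜ, (-(dg u j)) * (u j - v j))
        + (∑ i ∈ I, dg v i * (v i - u i)) := by
  intro u _ v _
  rw [hD, hι, hι]
  simp only [dotProduct]
  rw [← Finset.sum_add_sum_compl I (f := fun k =>
    (if k ∈ I then dg v k else v k) * (if k ∈ I then v k else -(dg v k))),
    ← Finset.sum_add_sum_compl I (f := fun k =>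
    (if k ∈ I then u k else -(dg u k)) * (if k ∈ I then dg v k else v k))]
  have h1 : ∀ k ∈ I, (if k ∈ I then dg v k else v k) * (if k ∈ I then v k else -(dg v k))
      = dg v k * v k := fun k hk => by simp [hk]
  have h2 : ∀ k ∈ Iᶜ, (if k ∈ I then dg v k else v k) * (if k ∈ I then v k else -(dg v k))
      = v k * -(dg v k) := fun k hk => by simp_all [Finset.mem_compl]
  have h3 : ∀ k ∈ I, (if k ∈ I then u k else -(dg u k)) * (if k ∈ I then dg v k else v k)
      = u k * dg v k := fun k hk => by simp [hk]
  have h4 : ∀ k ∈ Iᶜ, (if k ∈ I then u k else -(dg u k)) * (if k ∈ I then dg v k else v k)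
      = -(dg u k) * v k := fun k hk => by simp_all [Finset.mem_compl]
  rw [Finset.sum_congr rfl h1, Finset.sum_congr rfl h2, Finset.sum_congr rfl h3,
    Finset.sum_congr rfl h4]
  simp only [mul_sub, Finset.sum_sub_distrib]
  ring_nf
  have e1 : ∑ x ∈ Iᶜ, -(u x * dg u x) = ∑ x ∈ Iᶜ, -dg u x * u x :=
    Finset.sum_congr rfl fun x _ => by ring
  have e2 : ∑ x ∈ I, u x * dg v x = ∑ x ∈ I, dg v x * u x :=
    Finset.sum_congr rfl fun x _ => by ring
  rw [e1, e2]
  ring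
end

section
/- The canonical divergence is a weak contrast function (part of Theorem 4.14): with notation as above, define ρ : U × U → ℝ by ρ(u, v) = D(ι̃(u), ι̃(v)), where g is C² on U. Then (i) ρ(u, u) = 0 for all u ∈ U; (ii) for every u ∈ U, the derivative of the map u' ↦ ρ(u', v) at u' = u with v = u is zero, and the derivative of the map v' ↦ ρ(u, v') at v' = u is zero (i.e. ρ[X|−] = ρ[−|X] = 0 on the diagonal for every vector field X). -/
/-!
Along the Legendre lift `L = (x, p, z)` of a generating function the contact condition
`dz = p ⬝ᵥ dx` holds: `p_I = ∂g/∂x_I`, and the term `p_J ⬝ᵥ x_J` added to `g` in `z` is a partial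
Legendre transform, whose `dp_J`-terms cancel those of `dg` because `x_J = -∂g/∂p_J`. Given this,
`a ↦ D(L a, L u) = z a - x a ⬝ᵥ p u + const` has derivative `dz - p ⬝ᵥ dx = 0` at `u`, while in
the second slot `b ↦ (p ⬝ᵥ x - z) b - x u ⬝ᵥ p b` has derivative
`dp ⬝ᵥ x + p ⬝ᵥ dx - dz - x ⬝ᵥ dp = 0` at `u`.
-/

open ContinuousLinearMap

section Calculus

variable {𝕜 : Type*} [NontriviallyNormedField 𝕜] {E : Type*} [NormedAddCommGroup E]
  [NormedSpace 𝕜 E] {ι : Type*} {u : E}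

theorem HasFDerivAt.dotProduct [Fintype ι] {x y : E → ι → 𝕜} {x' y' : E →L[𝕜] ι → 𝕜}
    (hx : HasFDerivAt x x' u) (hy : HasFDerivAt y y' u) :
    HasFDerivAt (fun a => x a ⬝ᵥ y a)
      (∑ k, (x u k • (proj k).comp y' + y u k • (proj k).comp x')) u :=
  HasFDerivAt.fun_sum fun k _ => (hasFDerivAt_pi'.1 hx k).mul (hasFDerivAt_pi'.1 hy k)

variable [DecidableEq ι] (I : Finset ι)

def ContinuousLinearMap.finsetPiecewise (f' g' : E →L[𝕜] ι → 𝕜) : E →L[𝕜] ι → 𝕜 :=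
  pi fun k => if k ∈ I then (proj k).comp f' else (proj k).comp g'

@[simp]
theorem ContinuousLinearMap.finsetPiecewise_apply (f' g' : E →L[𝕜] ι → 𝕜) (h : E) :
    finsetPiecewise I f' g' h = I.piecewise (f' h) (g' h) := by
  ext k
  by_cases hk : k ∈ I <;> simp [finsetPiecewise, hk]

theorem HasFDerivAt.finset_piecewise {f g : E → ι → 𝕜} {f' g' : E →L[𝕜] ι → 𝕜}
    (hf : HasFDerivAt f f' u) (hg : HasFDerivAt g g' u) :
    HasFDerivAt (fun a => I.piecewise (f a) (g a)) (finsetPiecewise I f' g') u := by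
  refine hasFDerivAt_pi.2 fun k => ?_
  by_cases hk : k ∈ I
  · simpa [hk] using hasFDerivAt_pi'.1 hf k
  · simpa [hk] using hasFDerivAt_pi'.1 hg k

end Calculus

theorem ContinuousLinearMap.apply_eq_dotProduct {R ι : Type*} [CommSemiring R]
    [TopologicalSpace R] [Fintype ι] [DecidableEq ι] (f : (ι → R) →L[R] R) (h : ι → R) :
    f h = (fun k => f (Pi.single k 1)) ⬝ᵥ h := by
  conv_lhs => rw [pi_eq_sum_univ' h]
  simp [dotProduct, mul_comm]

theorem Finset.piecewise_dotProduct_piecewise {ι R : Type*} [Fintype ι] [DecidableEq ι]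
    [CommSemiring R] (I : Finset ι) (a b c d : ι → R) :
    I.piecewise a b ⬝ᵥ I.piecewise c d = ∑ k ∈ I, a k * c k + ∑ k ∈ Iᶜ, b k * d k := by
  rw [dotProduct, ← Finset.sum_add_sum_compl I]
  congr 1 <;> refine Finset.sum_congr rfl fun k hk => ?_ <;> simp_all

variable {ι : Type*} [Fintype ι]

def canonicalDivergence (P Q : (ι → ℝ) × (ι → ℝ) × ℝ) : ℝ :=
  P.2.2 + (Q.2.1 ⬝ᵥ Q.1 - Q.2.2) - P.1 ⬝ᵥ Q.2.1

theorem canonicalDivergence_self (P : (ι → ℝ) × (ι → ℝ) × ℝ) :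
    canonicalDivergence P P = 0 := by
  rw [canonicalDivergence, dotProduct_comm]
  ring

variable {E : Type*} [NormedAddCommGroup E] [NormedSpace ℝ E]

/-- `L = (x, p, z)` is differentiable at `u` and the contact form `dz - p ⬝ᵥ dx` vanishes on its
derivative there. -/
def IsContactAt (L : E → (ι → ℝ) × (ι → ℝ) × ℝ) (u : E) : Prop :=
  ∃ L' : E →L[ℝ] (ι → ℝ) × (ι → ℝ) × ℝ, HasFDerivAt L L' u ∧
    ∀ h, (L' h).2.2 = (L u).2.1 ⬝ᵥ (L' h).1

namespace IsContactAt

variable {L : E → (ι → ℝ) × (ι → ℝ) × ℝ} {u : E}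

theorem hasFDerivAt_canonicalDivergence_left (hL : IsContactAt L u) :
    HasFDerivAt (fun a => canonicalDivergence (L a) (L u)) (0 : E →L[ℝ] ℝ) u := by
  obtain ⟨L', hL', hcontact⟩ := hL
  refine ((hL'.snd.snd.add_const _).sub
    (hL'.fst.dotProduct (hasFDerivAt_const _ _))).congr_fderiv ?_
  ext h
  simp [hcontact, dotProduct]

theorem hasFDerivAt_canonicalDivergence_right (hL : IsContactAt L u) :
    HasFDerivAt (fun b => canonicalDivergence (L u) (L b)) (0 : E →L[ℝ] ℝ) u := by
  obtain ⟨L', hL', hcontact⟩ := hL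
  refine ((((hL'.snd.fst.dotProduct hL'.fst).sub hL'.snd.snd).const_add _).sub
    ((hasFDerivAt_const _ _).dotProduct hL'.snd.fst)).congr_fderiv ?_
  ext h
  simp [hcontact, dotProduct, Finset.sum_add_distrib]

end IsContactAt

variable [DecidableEq ι]

/-- The argument `w` packs `(x_I, p_J)` with `J = Iᶜ`, and `dg` stands for the gradient of `g`. -/
def generatingFunctionLift (I : Finset ι) (g : (ι → ℝ) → ℝ) (dg : (ι → ℝ) → ι → ℝ)
    (w : ι → ℝ) : (ι → ℝ) × (ι → ℝ) × ℝ :=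
  (I.piecewise w (-dg w), I.piecewise (dg w) w, ∑ j ∈ Iᶜ, w j * -dg w j + g w)

theorem isContactAt_generatingFunctionLift (I : Finset ι) {g : (ι → ℝ) → ℝ}
    {dg : (ι → ℝ) → ι → ℝ} {u : ι → ℝ} {g' : (ι → ℝ) →L[ℝ] ℝ} {dg' : (ι → ℝ) →L[ℝ] ι → ℝ}
    (hg : HasFDerivAt g g' u) (hgrad : ∀ h, g' h = dg u ⬝ᵥ h) (hdg : HasFDerivAt dg dg' u) :
    IsContactAt (generatingFunctionLift I g dg) u := by
  have hid := hasFDerivAt_id (𝕜 := ℝ) u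
  have hz : HasFDerivAt (fun w => ∑ j ∈ Iᶜ, w j * -dg w j + g w)
      (∑ j ∈ Iᶜ, (u j • -(proj j).comp dg' + -dg u j • proj j) + g') u :=
    (HasFDerivAt.fun_sum fun j _ =>
      (hasFDerivAt_apply j u).mul (hasFDerivAt_pi'.1 hdg j).neg).add hg
  refine ⟨_, (hid.finset_piecewise I hdg.neg).prodMk ((hdg.finset_piecewise I hid).prodMk hz),
    fun h => ?_⟩
  simp only [generatingFunctionLift, prod_apply, finsetPiecewise_apply,
    Finset.piecewise_dotProduct_piecewise, _root_.add_apply, hgrad]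
  -- the `Iᶜ`-part of `dg u ⬝ᵥ h` cancels the `h`-terms from `∑ j ∈ Iᶜ, w j * -dg w j`
  rw [dotProduct, ← Finset.sum_add_sum_compl I]
  simp only [smul_neg, Finset.sum_add_distrib, Finset.sum_neg_distrib, _root_.add_apply,
    _root_.neg_apply, _root_.sum_apply, _root_.smul_apply, ContinuousLinearMap.comp_apply,
    proj_apply, smul_eq_mul, mul_neg, neg_mul, id_apply, Pi.neg_apply]
  ring

/-- The canonical divergence is a weak contrast function (part of
Theorem 4.14): for `ρ(u, v) = D(ι̃(u), ι̃(v))` with `ι̃` the Legendre lift of the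
generating-function parametrization of a C² generating function `g`, one has
(i) `ρ(u, u) = 0`, and (ii) both first-order derivatives of `ρ` vanish on the diagonal:
the derivative of `u' ↦ ρ(u', u)` at `u` is zero and the derivative of `v' ↦ ρ(u, v')`
at `u` is zero. -/
theorem canonical_divergence_is_weak_contrast_function (n : ℕ) (I : Finset (Fin n))
    (U : Set (Fin n → ℝ)) (hU : IsOpen U)
    (g : (Fin n → ℝ) → ℝ) (hg : ContDiffOn ℝ 2 g U)
    (dg : (Fin n → ℝ) → Fin n → ℝ)
    (hdg : ∀ w k, dg w k = fderiv ℝ g w (Pi.single k 1))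
    (D : ((Fin n → ℝ) × (Fin n → ℝ) × ℝ) → ((Fin n → ℝ) × (Fin n → ℝ) × ℝ) → ℝ)
    (hD : ∀ P Q, D P Q = P.2.2 + (Q.2.1 ⬝ᵥ Q.1 - Q.2.2) - P.1 ⬝ᵥ Q.2.1)
    (ι : (Fin n → ℝ) → (Fin n → ℝ) × (Fin n → ℝ) × ℝ)
    (hι : ∀ w, ι w = ((fun k => if k ∈ I then w k else -(dg w k)),
                      (fun k => if k ∈ I then dg w k else w k),
                      (∑ j ∈ Iᶜ, w j * (-(dg w j))) + g w))
    (ρ : (Fin n → ℝ) → (Fin n → ℝ) → ℝ)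
    (hρ : ∀ u v, ρ u v = D (ι u) (ι v)) :
    (∀ u ∈ U, ρ u u = 0) ∧
    (∀ u ∈ U, fderiv ℝ (fun w => ρ w u) u = 0 ∧ fderiv ℝ (fun w => ρ u w) u = 0) := by
  have hιL : ι = generatingFunctionLift I g dg := funext hι
  have hρD : ∀ u v, ρ u v = canonicalDivergence (ι u) (ι v) := fun u v => (hρ u v).trans (hD _ _)
  refine ⟨fun u _ => by rw [hρD, canonicalDivergence_self], fun u hu => ?_⟩
  have hgu : ContDiffAt ℝ 2 g u := hg.contDiffAt (hU.mem_nhds hu)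
  have hdg_eq : dg = fun w k => fderiv ℝ g w (Pi.single k 1) := funext fun w => funext (hdg w)
  have hdgu : DifferentiableAt ℝ dg u := by
    rw [hdg_eq]
    exact differentiableAt_pi.2 fun k => ((hgu.fderiv_right le_rfl).differentiableAt
      one_ne_zero).clm_apply (differentiableAt_const _)
  have hgrad : ∀ h, fderiv ℝ g u h = dg u ⬝ᵥ h := fun h => by
    rw [hdg_eq, apply_eq_dotProduct]
  have hL := isContactAt_generatingFunctionLift I (hgu.differentiableAt two_ne_zero).hasFDerivAt
    hgrad hdgu.hasFDerivAt
  rw [← hιL] at hL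
  simp only [hρD]
  exact ⟨hL.hasFDerivAt_canonicalDivergence_left.fderiv,
    hL.hasFDerivAt_canonicalDivergence_right.fderiv⟩
end
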